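/- Let n ≥ 1 be a natural number, let H_m = ∑_{i=1}^{m} 1/i denote harmonic numbers, and let f(y) = y^n · log y for real y. Then for every real x > 0 and every natural number j ≤ n, the j-th iterated derivative of f at x equals (n! / (n-j)!) · (x^{n-j} · log x + (H_n - H_{n-j}) · x^{n-j}). -/

import Mathlib

noncomputable def H (n : ℕ) : ℝ := ∑ i ∈ Finset.Icc 1 n, (1 : ℝ) / i

lemma H_succ_sub (m : ℕ) (hm : 1 ≤ m) : H m = H (m - 1) + 1 / m := by
  obtain ⟨k, rfl⟩ := Nat.exists_eq_add_of_le hm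
  unfold H
  rw [show 1 + k - 1 = k by omega, show 1 + k = k + 1 by omega,
    Finset.sum_Icc_succ_top (by omega)]

lemma key (n : ℕ) : ∀ j, j ≤ n → ∀ x : ℝ, 0 < x →
    iteratedDeriv j (fun y : ℝ => y ^ n * Real.log y) x =
      ((Nat.factorial n : ℝ) / (Nat.factorial (n - j) : ℝ)) *
        (x ^ (n - j) * Real.log x + (H n - H (n - j)) * x ^ (n - j)) := by
  intro j
  induction j with
  | zero =>
    intro _ x hx
    have : (Nat.factorial n : ℝ) ≠ 0 := by positivity
    simp [iteratedDeriv_zero]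
    field_simp
  | succ j ih =>
    intro hj x hx
    have hj' : j ≤ n := by omega
    set m := n - j with hmdef
    have hm : 1 ≤ m := by omega
    have hm1 : n - (j + 1) = m - 1 := by omega
    set a : ℝ := H n - H m with ha
    set c : ℝ := (Nat.factorial n : ℝ) / (Nat.factorial m : ℝ) with hc
    rw [iteratedDeriv_succ]
    have heq : deriv (iteratedDeriv j (fun y : ℝ => y ^ n * Real.log y)) x =
        deriv (fun y : ℝ => c * (y ^ m * Real.log y + a * y ^ m)) x := by
      apply Filter.EventuallyEq.deriv_eq
      filter_upwards [eventually_gt_nhds hx] with y hy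
      exact ih hj' y hy
    rw [heq]
    have h1 : HasDerivAt (fun y : ℝ => y ^ m) ((m : ℝ) * x ^ (m - 1)) x :=
      hasDerivAt_pow m x
    have h2 : HasDerivAt Real.log x⁻¹ x := Real.hasDerivAt_log hx.ne'
    have h3 : HasDerivAt (fun y : ℝ => y ^ m * Real.log y)
        ((m : ℝ) * x ^ (m - 1) * Real.log x + x ^ m * x⁻¹) x := h1.mul h2
    have h4 : HasDerivAt (fun y : ℝ => a * y ^ m) (a * ((m : ℝ) * x ^ (m - 1))) x :=
      h1.const_mul a
    have h5 : HasDerivAt (fun y : ℝ => c * (y ^ m * Real.log y + a * y ^ m))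
        (c * ((m : ℝ) * x ^ (m - 1) * Real.log x + x ^ m * x⁻¹ +
          a * ((m : ℝ) * x ^ (m - 1)))) x := (h3.add h4).const_mul c
    rw [h5.deriv, hm1]
    have hxm : x ^ m * x⁻¹ = x ^ (m - 1) := by
      rw [show m = (m - 1) + 1 by omega, pow_succ]
      field_simp
      simp
    rw [hxm]
    have hfac : (Nat.factorial m : ℝ) = m * (Nat.factorial (m - 1)) := by
      have := Nat.succ_pred_eq_of_pos (by omega : 0 < m)
      rw [← this, Nat.factorial_succ]
      push_cast
      ring
    have hH : H (m - 1) = H m - 1 / m := by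
      rw [H_succ_sub m hm]; ring
    have hm0 : (m : ℝ) ≠ 0 := by positivity
    have hf0 : (Nat.factorial (m - 1) : ℝ) ≠ 0 := by positivity
    rw [hH, hc, hfac]
    field_simp
    ring

theorem iteratedDeriv_pow_mul_log (n : ℕ) (hn : 1 ≤ n) (x : ℝ) (hx : 0 < x)
    (j : ℕ) (hj : j ≤ n) :
    iteratedDeriv j (fun y : ℝ => y ^ n * Real.log y) x =
      ((Nat.factorial n : ℝ) / (Nat.factorial (n - j) : ℝ)) *
        (x ^ (n - j) * Real.log x + (H n - H (n - j)) * x ^ (n - j)) := by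
  exact key n j hj x hx
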